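/- Let n ≥ 1 and let X_{T₁,ε₁}, X_{T₂,ε₂} be BMS vector fields on ℝ × ℝ^n. Then [X_{T₁,ε₁}, X_{T₂,ε₂}] = X_{T₃,ε₃}, where ε₃ = [ε₁, ε₂] (the Lie bracket of vector fields on ℝ^n, which is again conformal Killing) and T₃ = (DT₂)·ε₁ − (DT₁)·ε₂ + (1/n)(T₁ · div ε₂ − T₂ · div ε₁). This exhibits the BMS Lie algebra as the semidirect sum of the conformal Killing algebra of ℝ^n acting on the space of supertranslation parameters T. -/

import Mathlib

/-- The Lie bracket of vector fields on a normed space, identified with smooth maps: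
`[X,Y](p) = (DY)(p) X(p) − (DX)(p) Y(p)`. -/
noncomputable def vfBracket {E : Type*} [NormedAddCommGroup E] [NormedSpace ℝ E]
    (X Y : E → E) : E → E :=
  fun p => fderiv ℝ Y p (X p) - fderiv ℝ X p (Y p)

/-- The divergence of a vector field on `ℝ^n`: `div ε = trace (Dε)`. -/
noncomputable def divg {n : ℕ} (ε : (Fin n → ℝ) → (Fin n → ℝ)) (y : Fin n → ℝ) : ℝ :=
  ∑ k, fderiv ℝ ε y (Pi.single k 1) k

/-- `ε` is a conformal Killing field of the flat Euclidean metric on `ℝ^n`: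
it is smooth and `(Dε)(y) + (Dε)(y)ᵀ = (2/n)(div ε)(y)·Id` for all `y`. -/
def IsConfKilling (n : ℕ) (ε : (Fin n → ℝ) → (Fin n → ℝ)) : Prop :=
  ContDiff ℝ (⊤ : ℕ∞) ε ∧ ∀ y i j,
    fderiv ℝ ε y (Pi.single j 1) i + fderiv ℝ ε y (Pi.single i 1) j
      = 2 / (n : ℝ) * divg ε y * (if i = j then 1 else 0)

/-- The BMS vector field `X_{T,ε}(u,y) = ((u/n)(div ε)(y) + T(y), ε(y))` on `ℝ × ℝ^n`. -/
noncomputable def bmsField (n : ℕ) (T : (Fin n → ℝ) → ℝ)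
    (ε : (Fin n → ℝ) → (Fin n → ℝ)) : ℝ × (Fin n → ℝ) → ℝ × (Fin n → ℝ) :=
  fun p => (p.1 / (n : ℝ) * divg ε p.2 + T p.2, ε p.2)

/-! ### Auxiliary lemmas -/

section Aux

variable {n : ℕ}

lemma contDiff_fderiv' {ε : (Fin n → ℝ) → (Fin n → ℝ)} (hε : ContDiff ℝ (⊤ : ℕ∞) ε) :
    ContDiff ℝ (⊤ : ℕ∞) (fderiv ℝ ε) := hε.fderiv_right (by simp)

lemma sndDeriv_symm {ε : (Fin n → ℝ) → (Fin n → ℝ)} (hε : ContDiff ℝ (⊤ : ℕ∞) ε)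
    (x v w : Fin n → ℝ) :
    fderiv ℝ (fderiv ℝ ε) x v w = fderiv ℝ (fderiv ℝ ε) x w v :=
  second_derivative_symmetric (fun y => (hε.differentiable (by simp) y).hasFDerivAt)
    ((contDiff_fderiv' hε).differentiable (by simp) x).hasFDerivAt v w

lemma contDiff_clm_app {ε η : (Fin n → ℝ) → (Fin n → ℝ)} (hε : ContDiff ℝ (⊤ : ℕ∞) ε)
    (hη : ContDiff ℝ (⊤ : ℕ∞) η) : ContDiff ℝ (⊤ : ℕ∞) (fun y => fderiv ℝ ε y (η y)) :=
  (contDiff_fderiv' hε).clm_apply hη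

lemma fderiv_clm_app {ε η : (Fin n → ℝ) → (Fin n → ℝ)} (hε : ContDiff ℝ (⊤ : ℕ∞) ε)
    (hη : ContDiff ℝ (⊤ : ℕ∞) η) (x v : Fin n → ℝ) :
    fderiv ℝ (fun y => fderiv ℝ ε y (η y)) x v
      = fderiv ℝ (fderiv ℝ ε) x v (η x) + fderiv ℝ ε x (fderiv ℝ η x v) := by
  rw [fderiv_clm_apply ((contDiff_fderiv' hε).differentiable (by simp) x)
    (hη.differentiable (by simp) x)]
  simp [add_comm]

lemma clm_apply_eq_sum (L : (Fin n → ℝ) →L[ℝ] (Fin n → ℝ)) (w : Fin n → ℝ) (i : Fin n) :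
    L w i = ∑ k, w k * L (Pi.single k 1) i := by
  have h : w = ∑ k, w k • (Pi.single k 1 : Fin n → ℝ) := by
    conv_lhs => rw [pi_eq_sum_univ w]
    congr 1; ext k j; simp [Pi.single_apply, eq_comm]
  conv_lhs => rw [h]
  rw [map_sum]
  simp [Finset.sum_apply]

lemma fderiv_eps3 {ε₁ ε₂ : (Fin n → ℝ) → (Fin n → ℝ)} (h₁ : ContDiff ℝ (⊤ : ℕ∞) ε₁)
    (h₂ : ContDiff ℝ (⊤ : ℕ∞) ε₂) (x v : Fin n → ℝ) :
    fderiv ℝ (fun y => fderiv ℝ ε₂ y (ε₁ y) - fderiv ℝ ε₁ y (ε₂ y)) x v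
      = fderiv ℝ (fderiv ℝ ε₂) x v (ε₁ x) + fderiv ℝ ε₂ x (fderiv ℝ ε₁ x v)
        - (fderiv ℝ (fderiv ℝ ε₁) x v (ε₂ x) + fderiv ℝ ε₁ x (fderiv ℝ ε₂ x v)) := by
  rw [fderiv_fun_sub ((contDiff_clm_app h₂ h₁).differentiable (by simp) x)
    ((contDiff_clm_app h₁ h₂).differentiable (by simp) x)]
  simp only [ContinuousLinearMap.sub_apply]
  rw [fderiv_clm_app h₂ h₁, fderiv_clm_app h₁ h₂]

lemma cross_trace (A B : (Fin n → ℝ) →L[ℝ] (Fin n → ℝ)) :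
    ∑ k, B (A (Pi.single k 1)) k = ∑ k, A (B (Pi.single k 1)) k := by
  have h1 : ∀ k, B (A (Pi.single k 1)) k = ∑ m, A (Pi.single k 1) m * B (Pi.single m 1) k :=
    fun k => clm_apply_eq_sum B _ k
  have h2 : ∀ k, A (B (Pi.single k 1)) k = ∑ m, B (Pi.single k 1) m * A (Pi.single m 1) k :=
    fun k => clm_apply_eq_sum A _ k
  rw [Finset.sum_congr rfl fun k _ => h1 k, Finset.sum_congr rfl fun k _ => h2 k,
    Finset.sum_comm]
  exact Finset.sum_congr rfl fun k _ => Finset.sum_congr rfl fun m _ => mul_comm _ _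

/-- Auxiliary continuous linear functional, evaluating an operator at `single k 1`
and taking the `k`-th coordinate. -/
noncomputable def Phi (n : ℕ) (k : Fin n) : ((Fin n → ℝ) →L[ℝ] (Fin n → ℝ)) →L[ℝ] ℝ :=
  (ContinuousLinearMap.proj k).comp (ContinuousLinearMap.apply ℝ (Fin n → ℝ) (Pi.single k 1))

lemma contDiff_divg {ε : (Fin n → ℝ) → (Fin n → ℝ)} (hε : ContDiff ℝ (⊤ : ℕ∞) ε) :
    ContDiff ℝ (⊤ : ℕ∞) (divg ε) := by
  have h : divg ε = fun y => ∑ k, Phi n k (fderiv ℝ ε y) := rfl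
  rw [h]
  exact ContDiff.sum fun k _ => (Phi n k).contDiff.comp (contDiff_fderiv' hε)

lemma fderiv_divg {ε : (Fin n → ℝ) → (Fin n → ℝ)} (hε : ContDiff ℝ (⊤ : ℕ∞) ε)
    (x v : Fin n → ℝ) :
    fderiv ℝ (divg ε) x v = ∑ k, fderiv ℝ (fderiv ℝ ε) x v (Pi.single k 1) k := by
  have hd' : ∀ k : Fin n, DifferentiableAt ℝ (fun y => Phi n k (fderiv ℝ ε y)) x :=
    fun k => ((Phi n k).contDiff.comp (contDiff_fderiv' hε)).differentiable (by simp) x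
  have h : divg ε = fun y => ∑ k, Phi n k (fderiv ℝ ε y) := rfl
  rw [h, fderiv_fun_sum (fun k _ => hd' k)]
  simp only [ContinuousLinearMap.sum_apply]
  congr 1; ext k
  have hc := ((Phi n k).hasFDerivAt.comp x
    (((contDiff_fderiv' hε).differentiable (by simp) x).hasFDerivAt)).fderiv
  rw [show (fun y => Phi n k (fderiv ℝ ε y)) = (Phi n k) ∘ (fderiv ℝ ε) from rfl, hc]
  simp [Phi]

lemma divg_bracket {ε₁ ε₂ : (Fin n → ℝ) → (Fin n → ℝ)} (h₁ : ContDiff ℝ (⊤ : ℕ∞) ε₁)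
    (h₂ : ContDiff ℝ (⊤ : ℕ∞) ε₂) (x : Fin n → ℝ) :
    divg (fun y => fderiv ℝ ε₂ y (ε₁ y) - fderiv ℝ ε₁ y (ε₂ y)) x
      = fderiv ℝ (divg ε₂) x (ε₁ x) - fderiv ℝ (divg ε₁) x (ε₂ x) := by
  have step : ∀ k : Fin n,
      fderiv ℝ (fun y => fderiv ℝ ε₂ y (ε₁ y) - fderiv ℝ ε₁ y (ε₂ y)) x (Pi.single k 1) k
      = (fderiv ℝ (fderiv ℝ ε₂) x (ε₁ x) (Pi.single k 1) k
          + fderiv ℝ ε₂ x (fderiv ℝ ε₁ x (Pi.single k 1)) k)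
        - (fderiv ℝ (fderiv ℝ ε₁) x (ε₂ x) (Pi.single k 1) k
          + fderiv ℝ ε₁ x (fderiv ℝ ε₂ x (Pi.single k 1)) k) := by
    intro k
    rw [fderiv_eps3 h₁ h₂]
    simp only [Pi.sub_apply, Pi.add_apply]
    rw [sndDeriv_symm h₂ x _ (ε₁ x), sndDeriv_symm h₁ x _ (ε₂ x)]
  simp only [divg] at *
  rw [Finset.sum_congr rfl fun k _ => step k, fderiv_divg h₂ x (ε₁ x), fderiv_divg h₁ x (ε₂ x)]
  rw [Finset.sum_sub_distrib, Finset.sum_add_distrib, Finset.sum_add_distrib,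
    cross_trace (fderiv ℝ ε₁ x) (fderiv ℝ ε₂ x)]
  ring

/-- Auxiliary continuous linear functional, evaluating an operator at `c` and
taking the `k`-th coordinate. -/
noncomputable def Psi (n : ℕ) (c : Fin n → ℝ) (k : Fin n) :
    ((Fin n → ℝ) →L[ℝ] (Fin n → ℝ)) →L[ℝ] ℝ :=
  (ContinuousLinearMap.proj k).comp (ContinuousLinearMap.apply ℝ (Fin n → ℝ) c)

lemma diff_entry {ε : (Fin n → ℝ) → (Fin n → ℝ)} (hε : ContDiff ℝ (⊤ : ℕ∞) ε)
    (c : Fin n → ℝ) (i : Fin n) (x : Fin n → ℝ) :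
    DifferentiableAt ℝ (fun y => fderiv ℝ ε y c i) x :=
  ((Psi n c i).contDiff.comp (contDiff_fderiv' hε)).differentiable (by simp) x

lemma fderiv_entry {ε : (Fin n → ℝ) → (Fin n → ℝ)} (hε : ContDiff ℝ (⊤ : ℕ∞) ε)
    (c : Fin n → ℝ) (i : Fin n) (x v : Fin n → ℝ) :
    fderiv ℝ (fun y => fderiv ℝ ε y c i) x v = fderiv ℝ (fderiv ℝ ε) x v c i := by
  have hc := ((Psi n c i).hasFDerivAt.comp x
    (((contDiff_fderiv' hε).differentiable (by simp) x).hasFDerivAt)).fderiv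
  rw [show (fun y => fderiv ℝ ε y c i) = (Psi n c i) ∘ (fderiv ℝ ε) from rfl, hc]
  simp [Psi]

lemma killing_snd {ε : (Fin n → ℝ) → (Fin n → ℝ)} (hε : ContDiff ℝ (⊤ : ℕ∞) ε)
    (hK : ∀ y i j, fderiv ℝ ε y (Pi.single j 1) i + fderiv ℝ ε y (Pi.single i 1) j
      = 2 / (n : ℝ) * divg ε y * (if i = j then 1 else 0))
    (x v : Fin n → ℝ) (i j : Fin n) :
    fderiv ℝ (fderiv ℝ ε) x v (Pi.single j 1) i + fderiv ℝ (fderiv ℝ ε) x v (Pi.single i 1) j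
      = 2 / (n : ℝ) * fderiv ℝ (divg ε) x v * (if i = j then 1 else 0) := by
  have hfun : (fun y => fderiv ℝ ε y (Pi.single j 1) i + fderiv ℝ ε y (Pi.single i 1) j)
      = fun y => (2 / (n : ℝ) * (if i = j then 1 else 0)) * divg ε y := by
    funext y; rw [hK y i j]; ring
  have e1 : fderiv ℝ (fderiv ℝ ε) x v (Pi.single j 1) i
        + fderiv ℝ (fderiv ℝ ε) x v (Pi.single i 1) j
      = fderiv ℝ (fun y => fderiv ℝ ε y (Pi.single j 1) i
          + fderiv ℝ ε y (Pi.single i 1) j) x v := by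
    rw [fderiv_fun_add (diff_entry hε _ i x) (diff_entry hε _ j x)]
    simp only [ContinuousLinearMap.add_apply]
    rw [fderiv_entry hε _ i x v, fderiv_entry hε _ j x v]
  rw [e1, hfun, fderiv_const_mul ((contDiff_divg hε).differentiable (by simp) x)]
  simp only [ContinuousLinearMap.smul_apply, smul_eq_mul]
  ring

lemma cross_cancel (a b : Fin n → Fin n → ℝ) (c₁ c₂ : ℝ)
    (ha : ∀ p q, a p q + a q p = c₁ * (if p = q then 1 else 0))
    (hb : ∀ p q, b p q + b q p = c₂ * (if p = q then 1 else 0)) (i j : Fin n) :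
    ∑ k, (a k j * b i k - b k j * a i k + a k i * b j k - b k i * a j k) = 0 := by
  have step : ∀ k, a k j * b i k - b k j * a i k + a k i * b j k - b k i * a j k
      = c₂ * (if i = k then 1 else 0) * a k j + c₁ * (if j = k then 1 else 0) * b i k
        - c₁ * (if i = k then 1 else 0) * b k j - c₂ * (if j = k then 1 else 0) * a i k := by
    intro k
    linear_combination b j k * ha i k - a i k * hb j k + b i k * ha j k - a j k * hb i k
      + c₁ * (if i = k then 1 else 0) * hb j k - c₂ * (if i = k then 1 else 0) * ha j k
  rw [Finset.sum_congr rfl fun k _ => step k]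
  simp [Finset.sum_sub_distrib, Finset.sum_add_distrib, mul_assoc, mul_ite, ite_mul,
    Finset.sum_ite_eq, Finset.sum_ite_eq']

lemma killing_bracket {ε₁ ε₂ : (Fin n → ℝ) → (Fin n → ℝ)}
    (h₁ : ContDiff ℝ (⊤ : ℕ∞) ε₁) (h₂ : ContDiff ℝ (⊤ : ℕ∞) ε₂)
    (hK₁ : ∀ y i j, fderiv ℝ ε₁ y (Pi.single j 1) i + fderiv ℝ ε₁ y (Pi.single i 1) j
      = 2 / (n : ℝ) * divg ε₁ y * (if i = j then 1 else 0))
    (hK₂ : ∀ y i j, fderiv ℝ ε₂ y (Pi.single j 1) i + fderiv ℝ ε₂ y (Pi.single i 1) j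
      = 2 / (n : ℝ) * divg ε₂ y * (if i = j then 1 else 0))
    (x : Fin n → ℝ) (i j : Fin n) :
    fderiv ℝ (fun y => fderiv ℝ ε₂ y (ε₁ y) - fderiv ℝ ε₁ y (ε₂ y)) x (Pi.single j 1) i
      + fderiv ℝ (fun y => fderiv ℝ ε₂ y (ε₁ y) - fderiv ℝ ε₁ y (ε₂ y)) x (Pi.single i 1) j
      = 2 / (n : ℝ) * divg (fun y => fderiv ℝ ε₂ y (ε₁ y) - fderiv ℝ ε₁ y (ε₂ y)) x
          * (if i = j then 1 else 0) := by
  set a : Fin n → Fin n → ℝ := fun p q => fderiv ℝ ε₁ x (Pi.single q 1) p with ha_def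
  set b : Fin n → Fin n → ℝ := fun p q => fderiv ℝ ε₂ x (Pi.single q 1) p with hb_def
  have ha : ∀ p q, a p q + a q p = (2 / (n : ℝ) * divg ε₁ x) * (if p = q then 1 else 0) := by
    intro p q; rw [ha_def]; simpa [mul_assoc] using hK₁ x p q
  have hb : ∀ p q, b p q + b q p = (2 / (n : ℝ) * divg ε₂ x) * (if p = q then 1 else 0) := by
    intro p q; rw [hb_def]; simpa [mul_assoc] using hK₂ x p q
  have e1 : ∀ (k l : Fin n),
      fderiv ℝ (fun y => fderiv ℝ ε₂ y (ε₁ y) - fderiv ℝ ε₁ y (ε₂ y)) x (Pi.single l 1) k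
      = fderiv ℝ (fderiv ℝ ε₂) x (ε₁ x) (Pi.single l 1) k
        + ∑ m, a m l * b k m
        - (fderiv ℝ (fderiv ℝ ε₁) x (ε₂ x) (Pi.single l 1) k
        + ∑ m, b m l * a k m) := by
    intro k l
    rw [fderiv_eps3 h₁ h₂]
    simp only [Pi.sub_apply, Pi.add_apply]
    rw [sndDeriv_symm h₂ x _ (ε₁ x), sndDeriv_symm h₁ x _ (ε₂ x),
      clm_apply_eq_sum (fderiv ℝ ε₂ x) (fderiv ℝ ε₁ x (Pi.single l 1)) k,
      clm_apply_eq_sum (fderiv ℝ ε₁ x) (fderiv ℝ ε₂ x (Pi.single l 1)) k]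
  rw [e1 i j, e1 j i, divg_bracket h₁ h₂ x]
  have hc := cross_cancel a b _ _ ha hb i j
  have hs2 := killing_snd h₂ hK₂ x (ε₁ x) i j
  have hs1 := killing_snd h₁ hK₁ x (ε₂ x) i j
  have hsum : ∑ m, (a m j * b i m - b m j * a i m + a m i * b j m - b m i * a j m) = 0 := hc
  rw [Finset.sum_sub_distrib, Finset.sum_add_distrib, Finset.sum_sub_distrib] at hsum
  linarith [hs1, hs2, hsum]

lemma bms_fderiv_apply {T : (Fin n → ℝ) → ℝ} {ε : (Fin n → ℝ) → (Fin n → ℝ)}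
    (hT : ContDiff ℝ (⊤ : ℕ∞) T) (hε : ContDiff ℝ (⊤ : ℕ∞) ε) (p w : ℝ × (Fin n → ℝ)) :
    fderiv ℝ (bmsField n T ε) p w
      = (w.1 / (n : ℝ) * divg ε p.2 + p.1 / (n : ℝ) * fderiv ℝ (divg ε) p.2 w.2
          + fderiv ℝ T p.2 w.2, fderiv ℝ ε p.2 w.2) := by
  have h1 : HasFDerivAt (fun q : ℝ × (Fin n → ℝ) => q.1 / (n : ℝ))
      ((1 / (n : ℝ)) • ContinuousLinearMap.fst ℝ ℝ (Fin n → ℝ)) p := by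
    have h := (hasFDerivAt_fst (p := p) (𝕜 := ℝ) (E := ℝ) (F := Fin n → ℝ)).const_mul (1 / (n : ℝ))
    simpa [div_eq_mul_inv, mul_comm, one_div] using h
  have h2 : HasFDerivAt (fun q : ℝ × (Fin n → ℝ) => divg ε q.2)
      ((fderiv ℝ (divg ε) p.2).comp (ContinuousLinearMap.snd ℝ ℝ (Fin n → ℝ))) p :=
    (((contDiff_divg hε).differentiable (by simp) p.2).hasFDerivAt).comp p hasFDerivAt_snd
  have h3 : HasFDerivAt (fun q : ℝ × (Fin n → ℝ) => T q.2)
      ((fderiv ℝ T p.2).comp (ContinuousLinearMap.snd ℝ ℝ (Fin n → ℝ))) p :=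
    ((hT.differentiable (by simp) p.2).hasFDerivAt).comp p hasFDerivAt_snd
  have h4 : HasFDerivAt (fun q : ℝ × (Fin n → ℝ) => ε q.2)
      ((fderiv ℝ ε p.2).comp (ContinuousLinearMap.snd ℝ ℝ (Fin n → ℝ))) p :=
    ((hε.differentiable (by simp) p.2).hasFDerivAt).comp p hasFDerivAt_snd
  have hf : HasFDerivAt (fun q : ℝ × (Fin n → ℝ) =>
      (q.1 / (n : ℝ) * divg ε q.2 + T q.2, ε q.2)) _ p :=
    HasFDerivAt.prodMk ((h1.mul h2).add h3) h4
  rw [show bmsField n T ε = fun q : ℝ × (Fin n → ℝ) =>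
    (q.1 / (n : ℝ) * divg ε q.2 + T q.2, ε q.2) from rfl, hf.fderiv]
  simp only [ContinuousLinearMap.prod_apply, ContinuousLinearMap.add_apply,
    ContinuousLinearMap.smul_apply, ContinuousLinearMap.coe_comp', Function.comp_apply,
    ContinuousLinearMap.coe_fst', ContinuousLinearMap.coe_snd', smul_eq_mul]
  exact Prod.ext (by dsimp; ring) rfl

end Aux

/-- The bracket of two BMS vector fields is `X_{T₃,ε₃}` with `ε₃ = [ε₁,ε₂]` (again
conformal Killing) and `T₃ = (DT₂)·ε₁ − (DT₁)·ε₂ + (1/n)(T₁ div ε₂ − T₂ div ε₁)`: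
the BMS algebra is the semidirect sum of the conformal Killing algebra of `ℝ^n`
acting on the supertranslation parameters. -/
theorem bms_bracket_formula {n : ℕ} (hn : 1 ≤ n)
    (T₁ T₂ : (Fin n → ℝ) → ℝ) (ε₁ ε₂ : (Fin n → ℝ) → (Fin n → ℝ))
    (hT₁ : ContDiff ℝ (⊤ : ℕ∞) T₁) (hT₂ : ContDiff ℝ (⊤ : ℕ∞) T₂)
    (h₁ : IsConfKilling n ε₁) (h₂ : IsConfKilling n ε₂) :
    IsConfKilling n (fun y => fderiv ℝ ε₂ y (ε₁ y) - fderiv ℝ ε₁ y (ε₂ y)) ∧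
    vfBracket (bmsField n T₁ ε₁) (bmsField n T₂ ε₂)
      = bmsField n
          (fun y => fderiv ℝ T₂ y (ε₁ y) - fderiv ℝ T₁ y (ε₂ y)
            + 1 / (n : ℝ) * (T₁ y * divg ε₂ y - T₂ y * divg ε₁ y))
          (fun y => fderiv ℝ ε₂ y (ε₁ y) - fderiv ℝ ε₁ y (ε₂ y)) := by
  obtain ⟨hs₁, hK₁⟩ := h₁
  obtain ⟨hs₂, hK₂⟩ := h₂
  constructor
  · exact ⟨(contDiff_clm_app hs₂ hs₁).sub (contDiff_clm_app hs₁ hs₂),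
      fun y i j => killing_bracket hs₁ hs₂ hK₁ hK₂ y i j⟩
  · funext p
    have hv : vfBracket (bmsField n T₁ ε₁) (bmsField n T₂ ε₂) p
        = fderiv ℝ (bmsField n T₂ ε₂) p (bmsField n T₁ ε₁ p)
          - fderiv ℝ (bmsField n T₁ ε₁) p (bmsField n T₂ ε₂ p) := rfl
    rw [hv, bms_fderiv_apply hT₂ hs₂ p (bmsField n T₁ ε₁ p),
      bms_fderiv_apply hT₁ hs₁ p (bmsField n T₂ ε₂ p)]
    have hb1 : bmsField n T₁ ε₁ p
        = (p.1 / (n : ℝ) * divg ε₁ p.2 + T₁ p.2, ε₁ p.2) := rfl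
    have hb2 : bmsField n T₂ ε₂ p
        = (p.1 / (n : ℝ) * divg ε₂ p.2 + T₂ p.2, ε₂ p.2) := rfl
    rw [hb1, hb2]
    have htgt : bmsField n
          (fun y => fderiv ℝ T₂ y (ε₁ y) - fderiv ℝ T₁ y (ε₂ y)
            + 1 / (n : ℝ) * (T₁ y * divg ε₂ y - T₂ y * divg ε₁ y))
          (fun y => fderiv ℝ ε₂ y (ε₁ y) - fderiv ℝ ε₁ y (ε₂ y)) p
        = (p.1 / (n : ℝ) * divg (fun y => fderiv ℝ ε₂ y (ε₁ y) - fderiv ℝ ε₁ y (ε₂ y)) p.2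
            + (fderiv ℝ T₂ p.2 (ε₁ p.2) - fderiv ℝ T₁ p.2 (ε₂ p.2)
              + 1 / (n : ℝ) * (T₁ p.2 * divg ε₂ p.2 - T₂ p.2 * divg ε₁ p.2)),
           fderiv ℝ ε₂ p.2 (ε₁ p.2) - fderiv ℝ ε₁ p.2 (ε₂ p.2)) := rfl
    rw [htgt, divg_bracket hs₁ hs₂ p.2, Prod.mk_sub_mk]
    exact Prod.ext (by dsimp; ring) rfl
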